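/- Let n be a positive integer. A polynomial in ℤ[x_1,…,x_n] is simultaneously a fundamental slide polynomial fs_a and a Young fundamental slide polynomial yfs_b (for weak compositions a, b of length n) if and only if it equals F_α(x_1,…,x_n) for some composition α with ℓ(α) ≤ n; likewise, a polynomial is simultaneously a monomial slide polynomial ms_a and a Young monomial slide polynomial yms_b if and only if it equals M_α(x_1,…,x_n) for some composition α with ℓ(α) ≤ n. That is, {fs_a} ∩ {yfs_b} = {F_α(x_1,…,x_n) : ℓ(α) ≤ n} and {ms_a} ∩ {yms_b} = {M_α(x_1,…,x_n) : ℓ(α) ≤ n}. -/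

import Mathlib

open scoped Classical
open MvPolynomial

namespace PaperYR

/-- A filling of a diagram with `m` rows (0-based, indexed from the bottom), where row `i`
has `c i` boxes (0-based column indices), with entries in `{1,…,n}` encoded as `Fin n`
(the value `e : Fin n` encodes the entry `e+1`). -/
def Filling (m n : ℕ) (c : Fin m → ℕ) : Type :=
  ((i : Fin m) × Fin (c i)) → Fin n

noncomputable instance (m n : ℕ) (c : Fin m → ℕ) : Fintype (Filling m n c) := by
  unfold Filling; infer_instance

/-- The monomial `x^{wt T}` of a filling: the product over all boxes of the variable
indexed by the entry of the box. -/
noncomputable def fmono {m n : ℕ} {c : Fin m → ℕ} (T : Filling m n c) :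
    MvPolynomial (Fin n) ℤ :=
  ∏ b : (i : Fin m) × Fin (c i), X (T b)

/-- The monomial of a filling, ignoring the boxes of column `0` (the basement column). -/
noncomputable def fmonoNB {m n : ℕ} {c : Fin m → ℕ} (T : Filling m n c) :
    MvPolynomial (Fin n) ℤ :=
  ∏ b ∈ Finset.univ.filter (fun b : (i : Fin m) × Fin (c i) => (b.2 : ℕ) ≠ 0), X (T b)

noncomputable def genfun {m n : ℕ} (c : Fin m → ℕ) (P : Filling m n c → Prop) :
    MvPolynomial (Fin n) ℤ :=
  ∑ T ∈ Finset.univ.filter P, fmono T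

noncomputable def genfunNB {n : ℕ} (c : Fin n → ℕ) (P : Filling n n c → Prop) :
    MvPolynomial (Fin n) ℤ :=
  ∑ T ∈ Finset.univ.filter P, fmonoNB T

section Preds

variable {m n : ℕ} {c : Fin m → ℕ}

def RowsWeakIncr (T : Filling m n c) : Prop :=
  ∀ (i : Fin m) (j j' : Fin (c i)), j ≤ j' → T ⟨i, j⟩ ≤ T ⟨i, j'⟩

def RowsWeakDecr (T : Filling m n c) : Prop :=
  ∀ (i : Fin m) (j j' : Fin (c i)), j ≤ j' → T ⟨i, j'⟩ ≤ T ⟨i, j⟩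

/-- Every entry of a lower row is strictly smaller than every entry of any higher row. -/
def RowsSeparated (T : Filling m n c) : Prop :=
  ∀ (i i' : Fin m), i < i' → ∀ (j : Fin (c i)) (j' : Fin (c i')), T ⟨i, j⟩ < T ⟨i', j'⟩

def RowsConstant (T : Filling m n c) : Prop :=
  ∀ (i : Fin m) (j j' : Fin (c i)), T ⟨i, j⟩ = T ⟨i, j'⟩

def FirstColStrictIncr (T : Filling m n c) : Prop :=
  ∀ (i i' : Fin m), i < i' → ∀ (h : 0 < c i) (h' : 0 < c i'), T ⟨i, ⟨0, h⟩⟩ < T ⟨i', ⟨0, h'⟩⟩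

def ColumnsDistinct (T : Filling m n c) : Prop :=
  ∀ (i i' : Fin m), i ≠ i' → ∀ (j : Fin (c i)) (j' : Fin (c i')),
    (j : ℕ) = (j' : ℕ) → T ⟨i, j⟩ ≠ T ⟨i', j'⟩

/-- Columns strictly increase from bottom to top. -/
def ColsStrictIncr (T : Filling m n c) : Prop :=
  ∀ (i i' : Fin m), i < i' → ∀ (j : Fin (c i)) (j' : Fin (c i')),
    (j : ℕ) = (j' : ℕ) → T ⟨i, j⟩ < T ⟨i', j'⟩

/-- Every entry of row `i` (1-based: row `i+1`) is at most its row index. -/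
def FlagUpper (T : Filling m n c) : Prop :=
  ∀ (i : Fin m) (j : Fin (c i)), (T ⟨i, j⟩ : ℕ) ≤ (i : ℕ)

/-- Every entry of row `i` (1-based: row `i+1`) is at least its row index. -/
def FlagLower (T : Filling m n c) : Prop :=
  ∀ (i : Fin m) (j : Fin (c i)), (i : ℕ) ≤ (T ⟨i, j⟩ : ℕ)

/-- Every Type A and Type B triple is an inversion triple. -/
def TriplesAB (T : Filling m n c) : Prop :=
  (∀ (i i' : Fin m), i < i' → c i' ≤ c i →
    ∀ (k : ℕ) (h1 : k + 1 < c i) (h2 : k + 1 < c i'),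
      ¬ (T ⟨i', ⟨k + 1, h2⟩⟩ ≤ T ⟨i, ⟨k, Nat.lt_of_succ_lt h1⟩⟩ ∧
         T ⟨i, ⟨k + 1, h1⟩⟩ ≤ T ⟨i', ⟨k + 1, h2⟩⟩)) ∧
  (∀ (i i' : Fin m), i < i' → c i < c i' →
    ∀ (k : ℕ) (h1 : k + 1 < c i') (h2 : k < c i),
      ¬ (T ⟨i, ⟨k, h2⟩⟩ ≤ T ⟨i', ⟨k, Nat.lt_of_succ_lt h1⟩⟩ ∧
         T ⟨i', ⟨k + 1, h1⟩⟩ ≤ T ⟨i, ⟨k, h2⟩⟩))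

/-- Every Type I and Type II Young triple is a Young inversion triple. -/
def TriplesYoung (T : Filling m n c) : Prop :=
  (∀ (i i' : Fin m), i < i' → c i ≤ c i' →
    ∀ (k : ℕ) (h1 : k + 1 < c i') (h2 : k + 1 < c i),
      ¬ (T ⟨i, ⟨k + 1, h2⟩⟩ ≤ T ⟨i', ⟨k + 1, h1⟩⟩ ∧
         T ⟨i', ⟨k, Nat.lt_of_succ_lt h1⟩⟩ ≤ T ⟨i, ⟨k + 1, h2⟩⟩)) ∧
  (∀ (i i' : Fin m), i < i' → c i' < c i →
    ∀ (k : ℕ) (h1 : k + 1 < c i) (h2 : k < c i'),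
      ¬ (T ⟨i', ⟨k, h2⟩⟩ ≤ T ⟨i, ⟨k + 1, h1⟩⟩ ∧
         T ⟨i, ⟨k, Nat.lt_of_succ_lt h1⟩⟩ ≤ T ⟨i', ⟨k, h2⟩⟩))

end Preds

/-- The first entry of each nonempty row equals its row index. -/
def FirstEntryRowIndex {n : ℕ} {c : Fin n → ℕ} (T : Filling n n c) : Prop :=
  ∀ (i : Fin n) (h : 0 < c i), T ⟨i, ⟨0, h⟩⟩ = i

/-! ### Polynomials indexed by weak compositions (of length `n`, in `n` variables) -/

/-- The key polynomial `κ_a`: generating function of `KSSF(a)`, fillings of `D(rev a)`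
with a basement column whose entry in row `i` (1-based) is `n+1-i`. -/
noncomputable def keyPoly (n : ℕ) (a : Fin n → ℕ) : MvPolynomial (Fin n) ℤ :=
  genfunNB (fun i => a i.rev + 1) (fun T =>
    (∀ i : Fin n, T ⟨i, ⟨0, Nat.succ_pos _⟩⟩ = i.rev) ∧
    RowsWeakDecr T ∧ ColumnsDistinct T ∧ TriplesAB T)

/-- The Young key polynomial `YK_a`: generating function of `YKSSF(a)`, fillings of
`D(rev a)` with a basement column whose entry in row `i` (1-based) is `i`. -/
noncomputable def youngKey (n : ℕ) (a : Fin n → ℕ) : MvPolynomial (Fin n) ℤ :=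
  genfunNB (fun i => a i.rev + 1) (fun T =>
    (∀ i : Fin n, T ⟨i, ⟨0, Nat.succ_pos _⟩⟩ = i) ∧
    RowsWeakIncr T ∧ ColumnsDistinct T ∧ TriplesYoung T)

/-- The Demazure atom `A_a`: generating function of `ASSF(a)`. -/
noncomputable def atom (n : ℕ) (a : Fin n → ℕ) : MvPolynomial (Fin n) ℤ :=
  genfun (n := n) a (fun T =>
    RowsWeakDecr T ∧ ColumnsDistinct T ∧ FirstEntryRowIndex T ∧ TriplesAB T)

/-- The Young atom `YA_a`: generating function of `YASSF(a)`. -/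
noncomputable def youngAtom (n : ℕ) (a : Fin n → ℕ) : MvPolynomial (Fin n) ℤ :=
  genfun (n := n) a (fun T =>
    RowsWeakIncr T ∧ ColumnsDistinct T ∧ FirstEntryRowIndex T ∧ TriplesYoung T)

/-- The fundamental slide polynomial `fs_a`: generating function of `FF(a)`. -/
noncomputable def fslide (n : ℕ) (a : Fin n → ℕ) : MvPolynomial (Fin n) ℤ :=
  genfun (n := n) a (fun T => RowsWeakDecr T ∧ FlagUpper T ∧ RowsSeparated T)

/-- The monomial slide polynomial `ms_a`: generating function of `MF(a)`. -/
noncomputable def mslide (n : ℕ) (a : Fin n → ℕ) : MvPolynomial (Fin n) ℤ :=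
  genfun (n := n) a (fun T => RowsWeakDecr T ∧ FlagUpper T ∧ RowsSeparated T ∧ RowsConstant T)

/-- The Young fundamental slide polynomial `yfs_a`: generating function of `YFF(a)`. -/
noncomputable def yfslide (n : ℕ) (a : Fin n → ℕ) : MvPolynomial (Fin n) ℤ :=
  genfun (n := n) a (fun T => RowsWeakIncr T ∧ FlagLower T ∧ RowsSeparated T)

/-- The Young monomial slide polynomial `yms_a`: generating function of `YMF(a)`. -/
noncomputable def ymslide (n : ℕ) (a : Fin n → ℕ) : MvPolynomial (Fin n) ℤ :=
  genfun (n := n) a (fun T => RowsWeakIncr T ∧ FlagLower T ∧ RowsSeparated T ∧ RowsConstant T)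

/-- The fundamental particle `fp_a`: generating function of `LF(a)`. -/
noncomputable def fparticle (n : ℕ) (a : Fin n → ℕ) : MvPolynomial (Fin n) ℤ :=
  genfun (n := n) a (fun T =>
    RowsWeakDecr T ∧ ColumnsDistinct T ∧ FirstEntryRowIndex T ∧ TriplesAB T ∧ RowsSeparated T)

/-- The Young fundamental particle `yfp_a`: generating function of `YLF(a)`. -/
noncomputable def yfparticle (n : ℕ) (a : Fin n → ℕ) : MvPolynomial (Fin n) ℤ :=
  genfun (n := n) a (fun T =>
    RowsWeakIncr T ∧ ColumnsDistinct T ∧ FirstEntryRowIndex T ∧ TriplesYoung T ∧ RowsSeparated T)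

/-- The quasi-key polynomial `QK_a`: generating function of `QF(a)`. -/
noncomputable def quasiKey (n : ℕ) (a : Fin n → ℕ) : MvPolynomial (Fin n) ℤ :=
  genfun (n := n) a (fun T =>
    RowsWeakDecr T ∧ FlagUpper T ∧ FirstColStrictIncr T ∧ ColumnsDistinct T ∧ TriplesAB T)

/-- The Young quasi-key polynomial `YQK_a`: generating function of `YQF(a)`. -/
noncomputable def youngQuasiKey (n : ℕ) (a : Fin n → ℕ) : MvPolynomial (Fin n) ℤ :=
  genfun (n := n) a (fun T =>
    RowsWeakIncr T ∧ FlagLower T ∧ FirstColStrictIncr T ∧ ColumnsDistinct T ∧ TriplesYoung T)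

/-! ### Polynomials indexed by compositions and partitions -/

/-- The shape of a composition (or partition) given as a list:
row `i` (0-based, from the bottom) has `α.get i` boxes. -/
def cshape (α : List ℕ) : Fin α.length → ℕ := fun i => α.get i

/-- The fundamental quasisymmetric polynomial `F_α(x_1,…,x_n)`, as the generating function
of fundamental reverse composition tableaux. -/
noncomputable def Fqs (n : ℕ) (α : List ℕ) : MvPolynomial (Fin n) ℤ :=
  genfun (n := n) (cshape α) (fun T => RowsWeakDecr T ∧ RowsSeparated T)

/-- The monomial quasisymmetric polynomial `M_α(x_1,…,x_n)`, as the generating function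
of monomial reverse composition tableaux. -/
noncomputable def Mqs (n : ℕ) (α : List ℕ) : MvPolynomial (Fin n) ℤ :=
  genfun (n := n) (cshape α) (fun T => RowsWeakDecr T ∧ RowsSeparated T ∧ RowsConstant T)

/-- The generating function of fundamental Young composition tableaux of shape `α`. -/
noncomputable def FqsYoung (n : ℕ) (α : List ℕ) : MvPolynomial (Fin n) ℤ :=
  genfun (n := n) (cshape α) (fun T => RowsWeakIncr T ∧ RowsSeparated T)

/-- The generating function of monomial Young composition tableaux of shape `α`. -/
noncomputable def MqsYoung (n : ℕ) (α : List ℕ) : MvPolynomial (Fin n) ℤ :=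
  genfun (n := n) (cshape α) (fun T => RowsWeakIncr T ∧ RowsSeparated T ∧ RowsConstant T)

/-- The quasisymmetric Schur polynomial `QS_α(x_1,…,x_n)`: generating function of `RCT(α)`. -/
noncomputable def QSpoly (n : ℕ) (α : List ℕ) : MvPolynomial (Fin n) ℤ :=
  genfun (n := n) (cshape α) (fun T => RowsWeakDecr T ∧ FirstColStrictIncr T ∧ TriplesAB T)

/-- The Young quasisymmetric Schur polynomial `YQS_α(x_1,…,x_n)`:
generating function of `YCT(α)`. -/
noncomputable def YQSpoly (n : ℕ) (α : List ℕ) : MvPolynomial (Fin n) ℤ :=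
  genfun (n := n) (cshape α) (fun T => RowsWeakIncr T ∧ FirstColStrictIncr T ∧ TriplesYoung T)

/-- The Schur polynomial `s_λ(x_1,…,x_n)`: generating function of `SSYT_n(λ)`. -/
noncomputable def schurPoly (n : ℕ) (lam : List ℕ) : MvPolynomial (Fin n) ℤ :=
  genfun (n := n) (cshape lam) (fun T => RowsWeakIncr T ∧ ColsStrictIncr T)

/-! ### Words, Knuth equivalence, keys, compatible sequences -/

/-- Knuth equivalence: the smallest equivalence relation on words generated by the two
elementary Knuth moves. -/
inductive Knuth : List ℕ → List ℕ → Prop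
  | rel1 (u v : List ℕ) (x y z : ℕ) (h1 : x ≤ y) (h2 : y < z) :
      Knuth (u ++ x :: z :: y :: v) (u ++ z :: x :: y :: v)
  | rel2 (u v : List ℕ) (x y z : ℕ) (h1 : x < y) (h2 : y ≤ z) :
      Knuth (u ++ y :: x :: z :: v) (u ++ y :: z :: x :: v)
  | refl (w : List ℕ) : Knuth w w
  | symm {w w' : List ℕ} : Knuth w w' → Knuth w' w
  | trans {w w' w'' : List ℕ} : Knuth w w' → Knuth w' w'' → Knuth w w''

/-- `f(w)`: replace each letter `i` of `w` by `n+1-i`. -/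
def fword (n : ℕ) (w : List ℕ) : List ℕ := w.map (fun x => n + 1 - x)

/-- `frev(w) = f(rev(w))`. -/
def frev (n : ℕ) (w : List ℕ) : List ℕ := fword n w.reverse

/-- The largest part of the weak composition `a`. -/
def maxPart (n : ℕ) (a : Fin n → ℕ) : ℕ := Finset.univ.sup a

/-- The entries of column `j+1` (0-based `j`) of the key `key(a)`, read from top to bottom
(i.e., in decreasing order): the 1-based row indices `i` with `a_i ≥ j+1`. -/
def keyColWord (n : ℕ) (a : Fin n → ℕ) (j : ℕ) : List ℕ :=
  (((List.finRange n).filter (fun i => decide (j + 1 ≤ a i))).reverse).map (fun i => (i : ℕ) + 1)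

/-- `col(key(a))`: the column word of `key(a)`, columns read left to right. -/
def colKey (n : ℕ) (a : Fin n → ℕ) : List ℕ :=
  (List.range (maxPart n a)).flatMap (fun j => keyColWord n a j)

/-- `col_R(key(a))`: the right-to-left column word of `key(a)`. -/
def colRKey (n : ℕ) (a : Fin n → ℕ) : List ℕ :=
  ((List.range (maxPart n a)).reverse).flatMap (fun j => keyColWord n a j)

/-- `w` is a `b`-compatible word (alphabet `{1,…,n}`). -/
def Compatible (n : ℕ) (b w : List ℕ) : Prop :=
  w.length = b.length ∧
  (∀ x ∈ w, 1 ≤ x ∧ x ≤ n) ∧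
  (∀ k : ℕ, k + 1 < w.length → w.getD k 0 ≤ w.getD (k + 1) 0) ∧
  (∀ k : ℕ, k + 1 < b.length → b.getD k 0 < b.getD (k + 1) 0 → w.getD k 0 < w.getD (k + 1) 0) ∧
  (∀ k : ℕ, k < b.length → w.getD k 0 ≤ b.getD k 0)

/-- `w` is the entrywise maximal `b`-compatible word. -/
def IsMaxCompat (n : ℕ) (b w : List ℕ) : Prop :=
  Compatible n b w ∧ ∀ w' : List ℕ, Compatible n b w' → List.Forall₂ (· ≤ ·) w' w

/-! ### Column word factorization, column-frank words, and left keys -/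

/-- Split off the longest strictly decreasing prefix of a word. -/
def decRunSplit : List ℕ → List ℕ × List ℕ
  | [] => ([], [])
  | [x] => ([x], [])
  | x :: y :: r =>
    if y < x then
      let p := decRunSplit (y :: r)
      (x :: p.1, p.2)
    else ([x], y :: r)

def cwfAux : ℕ → List ℕ → List (List ℕ)
  | 0, _ => []
  | _, [] => []
  | Nat.succ fuel, x :: r =>
    let p := decRunSplit (x :: r)
    p.1 :: cwfAux fuel p.2

/-- The column word factorization of `v`: its decomposition into maximal consecutive
strictly decreasing subwords. -/
def cwf (v : List ℕ) : List (List ℕ) := cwfAux v.length v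

/-- The column form of `v`: the lengths of the subwords in its column word factorization. -/
def colform (v : List ℕ) : List ℕ := (cwf v).map List.length

/-- The first subword in the column word factorization of `v`. -/
def firstRun (v : List ℕ) : List ℕ := (cwf v).headD []

/-- The nonzero parts of the conjugate of `sort(a)`. -/
noncomputable def conjParts (n : ℕ) (a : Fin n → ℕ) : List ℕ :=
  (List.range (maxPart n a)).map
    (fun j => (Finset.univ.filter (fun i : Fin n => j + 1 ≤ a i)).card)

/-- `v` is column-frank (for a tableau of shape `sort(a)`): its column form is a
rearrangement of the nonzero parts of the conjugate partition. -/
def ColumnFrank (n : ℕ) (a : Fin n → ℕ) (v : List ℕ) : Prop :=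
  List.Perm (colform v) (conjParts n a)

/-- The column word `col(T)` of a filling `T` (columns top to bottom, left to right),
with the `Fin n`-encoded entries converted to the 1-based letters. -/
def colWordT {n : ℕ} {c : Fin n → ℕ} (T : Filling n n c) : List ℕ :=
  (List.range (Finset.univ.sup c)).flatMap (fun j =>
    ((List.finRange n).reverse).filterMap (fun i =>
      if h : j < c i then some ((T ⟨i, ⟨j, h⟩⟩ : ℕ) + 1) else none))

/-- The number of entries in column `j+1` of `key(a)`. -/
noncomputable def keyColCard (n : ℕ) (a : Fin n → ℕ) (j : ℕ) : ℕ :=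
  (Finset.univ.filter (fun i : Fin n => j + 1 ≤ a i)).card

/-- The set of (1-based) entries in column `j+1` of `key(a)`. -/
noncomputable def keyColFinset (n : ℕ) (a : Fin n → ℕ) (j : ℕ) : Finset ℕ :=
  (Finset.univ.filter (fun i : Fin n => j + 1 ≤ a i)).image (fun i => (i : ℕ) + 1)

/-- `K₋(T) = key(a)`: for each column `j` of `key(a)`, there is a column-frank word
Knuth equivalent to `col(T)` whose first subword has length `λ'_j` and whose first
subword's set of letters is the entry set of column `j` of `key(a)`. -/
def LeftKeyEq (n : ℕ) (a : Fin n → ℕ) {c : Fin n → ℕ} (T : Filling n n c) : Prop :=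
  ∀ j < maxPart n a, ∃ v : List ℕ,
    Knuth v (colWordT T) ∧ ColumnFrank n a v ∧
    (firstRun v).length = keyColCard n a j ∧
    (firstRun v).toFinset = keyColFinset n a j

/-- `K₋(T) ≥ key(a)` entrywise. -/
def LeftKeyGe (n : ℕ) (a : Fin n → ℕ) {c : Fin n → ℕ} (T : Filling n n c) : Prop :=
  ∀ j < maxPart n a, ∃ v : List ℕ,
    Knuth v (colWordT T) ∧ ColumnFrank n a v ∧
    (firstRun v).length = keyColCard n a j ∧
    List.Forall₂ (fun p q => q ≤ p) (((firstRun v).toFinset).sort (· ≤ ·))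
      ((keyColFinset n a j).sort (· ≤ ·))

/-- `sort(a)`: the weakly decreasing rearrangement of `a`. -/
noncomputable def sortDesc (n : ℕ) (a : Fin n → ℕ) : Fin n → ℕ :=
  fun i => (a ∘ Tuple.sort a) i.rev

/-- The word consisting of `a_1` copies of `1`, then `a_2` copies of `2`, etc. -/
def bword (n : ℕ) (a : Fin n → ℕ) : List ℕ :=
  (List.finRange n).flatMap (fun i => List.replicate (a i) ((i : ℕ) + 1))

/-! ### Divided differences and permutations -/

/-- The variable `x_i` (1-based); junk value `0` out of range. -/
noncomputable def xvar (n : ℕ) (i : ℕ) : MvPolynomial (Fin n) ℤ :=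
  if h : 1 ≤ i ∧ i ≤ n then X (⟨i - 1, by omega⟩ : Fin n) else 0

/-- `s_i(f)`: exchange the variables `x_i` and `x_{i+1}` (1-based). -/
noncomputable def swapVars (n : ℕ) (i : ℕ) (f : MvPolynomial (Fin n) ℤ) :
    MvPolynomial (Fin n) ℤ :=
  if h : 1 ≤ i ∧ i < n then
    rename (Equiv.swap (⟨i - 1, by omega⟩ : Fin n) (⟨i, h.2⟩ : Fin n)) f
  else f

/-- The divided difference `∂_i(f)`: the unique polynomial `g` with
`(x_i - x_{i+1}) * g = f - s_i(f)`. -/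
noncomputable def ddiff (n : ℕ) (i : ℕ) (f : MvPolynomial (Fin n) ℤ) :
    MvPolynomial (Fin n) ℤ :=
  if h : ∃ g, (xvar n i - xvar n (i + 1)) * g = f - swapVars n i f then h.choose else 0

/-- `π_i(f) = ∂_i(x_i f)`. -/
noncomputable def piOp (n : ℕ) (i : ℕ) (f : MvPolynomial (Fin n) ℤ) :
    MvPolynomial (Fin n) ℤ :=
  ddiff n i (xvar n i * f)

/-- `π̂_i(f) = -∂_i(x_{i+1} f)`. -/
noncomputable def piHat (n : ℕ) (i : ℕ) (f : MvPolynomial (Fin n) ℤ) :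
    MvPolynomial (Fin n) ℤ :=
  - ddiff n i (xvar n (i + 1) * f)

/-- The automorphism `I` of `ℤ[x_1,…,x_n]` with `I(x_j) = x_{n+1-j}`. -/
noncomputable def Iauto (n : ℕ) (f : MvPolynomial (Fin n) ℤ) : MvPolynomial (Fin n) ℤ :=
  rename Fin.rev f

/-- The adjacent transposition `s_i = (i, i+1)` (1-based) of `Fin n`. -/
def adjSwap (n : ℕ) (i : ℕ) : Equiv.Perm (Fin n) :=
  if h : 1 ≤ i ∧ i < n then Equiv.swap (⟨i - 1, by omega⟩ : Fin n) (⟨i, h.2⟩ : Fin n) else 1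

/-- The permutation `s_{i_1} s_{i_2} ⋯ s_{i_r}` determined by a word of 1-based indices,
composed so that `w(m) = s_{i_1}(s_{i_2}(⋯ s_{i_r}(m)⋯))`. -/
def wordPerm (n : ℕ) (l : List ℕ) : Equiv.Perm (Fin n) := (l.map (adjSwap n)).prod

/-- The (Coxeter) length of a permutation: the minimal length of a word of adjacent
transpositions expressing it. -/
noncomputable def permLen (n : ℕ) (w : Equiv.Perm (Fin n)) : ℕ :=
  sInf {r : ℕ | ∃ l : List ℕ, (∀ i ∈ l, 1 ≤ i ∧ i < n) ∧ wordPerm n l = w ∧ l.length = r}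

/-- `l` is a reduced word for `w` (1-based letters). -/
def IsReducedWord (n : ℕ) (w : Equiv.Perm (Fin n)) (l : List ℕ) : Prop :=
  (∀ i ∈ l, 1 ≤ i ∧ i < n) ∧ wordPerm n l = w ∧ l.length = permLen n w


noncomputable def wtF {m n : ℕ} {c : Fin m → ℕ} (T : Filling m n c) : Fin n →₀ ℕ :=
  ∑ b : (i : Fin m) × Fin (c i), Finsupp.single (T b) 1

lemma fmono_eq {m n : ℕ} {c : Fin m → ℕ} (T : Filling m n c) :
    fmono T = monomial (wtF T) 1 := by
  classical
  unfold fmono wtF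
  induction (Finset.univ : Finset ((i : Fin m) × Fin (c i))) using Finset.induction with
  | empty => simp
  | insert _ _ h ih =>
      rw [Finset.prod_insert h, Finset.sum_insert h, ih, X, monomial_mul, one_mul]

lemma coeff_genfun {m n : ℕ} (c : Fin m → ℕ) (P : Filling m n c → Prop) (γ : Fin n →₀ ℕ) :
    coeff γ (genfun c P) =
      ((Finset.univ.filter (fun T : Filling m n c => P T ∧ wtF T = γ)).card : ℤ) := by
  classical
  unfold genfun
  rw [MvPolynomial.coeff_sum]
  have : ∀ T ∈ Finset.univ.filter P, coeff γ (fmono T) = if wtF T = γ then (1:ℤ) else 0 := by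
    intro T _; rw [fmono_eq, coeff_monomial]
  rw [Finset.sum_congr rfl this, Finset.sum_boole, ← Finset.filter_filter]

lemma mem_genfun_iff {m n : ℕ} (c : Fin m → ℕ) (P : Filling m n c → Prop) (γ : Fin n →₀ ℕ) :
    coeff γ (genfun c P) ≠ 0 ↔ ∃ T : Filling m n c, P T ∧ wtF T = γ := by
  classical
  rw [coeff_genfun]
  simp [Finset.card_eq_zero, Finset.filter_eq_empty_iff]

lemma wtF_apply {m n : ℕ} {c : Fin m → ℕ} (T : Filling m n c) (v : Fin n) :
    wtF T v = (Finset.univ.filter (fun b : (i : Fin m) × Fin (c i) => T b = v)).card := by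
  classical
  unfold wtF
  rw [Finsupp.finset_sum_apply]
  simp [Finsupp.single_apply, Finset.sum_boole]
  convert (Finset.card_filter _ _).symm

lemma wtF_pos {m n : ℕ} {c : Fin m → ℕ} (T : Filling m n c) (b : (i : Fin m) × Fin (c i)) :
    wtF T (T b) ≠ 0 := by
  rw [wtF_apply]
  simp only [ne_eq, Finset.card_eq_zero, Finset.filter_eq_empty_iff]
  push_neg
  exact ⟨b, Finset.mem_univ b, rfl⟩

lemma wtF_support {m n : ℕ} {c : Fin m → ℕ} (T : Filling m n c) (v : Fin n)
    (h : wtF T v ≠ 0) : ∃ b, T b = v := by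
  rw [wtF_apply] at h
  simp only [ne_eq, Finset.card_eq_zero, Finset.filter_eq_empty_iff] at h
  push_neg at h
  obtain ⟨b, _, hb⟩ := h
  exact ⟨b, hb⟩

lemma genfun_equiv {m m' n : ℕ} {c : Fin m → ℕ} {d : Fin m' → ℕ}
    (e : ((k : Fin m') × Fin (d k)) ≃ ((i : Fin m) × Fin (c i)))
    (P : Filling m n c → Prop) (Q : Filling m' n d → Prop)
    (hPQ : ∀ T : Filling m n c, P T ↔ Q (fun b => T (e b))) :
    genfun c P = genfun d Q := by
  classical
  unfold genfun
  refine Finset.sum_nbij' (fun T => fun b => T (e b)) (fun S => fun b => S (e.symm b))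
    ?_ ?_ ?_ ?_ ?_
  · intro T hT
    simp only [Finset.mem_filter, Finset.mem_univ, true_and] at hT ⊢
    exact Finset.mem_filter.mpr ⟨Finset.mem_univ _, (hPQ T).1 hT⟩
  · intro S hS
    simp only [Finset.mem_filter, Finset.mem_univ, true_and] at hS ⊢
    refine Finset.mem_filter.mpr ⟨Finset.mem_univ _, ?_⟩
    refine (hPQ _).2 ?_; show Q (fun b => S (e.symm (e b)))
    have : (fun b => S (e.symm (e b))) = S := by
      funext b; exact congrArg S (e.symm_apply_apply b)
    rw [this]; exact hS
  · intro T _; funext b; simp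
  · intro S _; funext b; simp
  · intro T _
    unfold fmono
    exact (Equiv.prod_comp e (fun b => X (T b))).symm


section SepBounds

variable {m n : ℕ} {c : Fin m → ℕ}

/-- number of nonzero rows strictly below `i` -/
noncomputable def rankBelow (c : Fin m → ℕ) (i : Fin m) : ℕ :=
  (Finset.univ.filter fun i' : Fin m => i' < i ∧ c i' ≠ 0).card

/-- number of nonzero rows strictly above `i` -/
noncomputable def rankAbove (c : Fin m → ℕ) (i : Fin m) : ℕ :=
  (Finset.univ.filter fun i' : Fin m => i < i' ∧ c i' ≠ 0).card

noncomputable def nzRows (c : Fin m → ℕ) : ℕ :=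
  (Finset.univ.filter fun i' : Fin m => c i' ≠ 0).card

lemma rankBelow_le (i : Fin m) : rankBelow c i ≤ (i : ℕ) := by
  classical
  unfold rankBelow
  have : (Finset.univ.filter fun i' : Fin m => i' < i ∧ c i' ≠ 0).card ≤ (Finset.range (i:ℕ)).card := by
    refine Finset.card_le_card_of_injOn (fun i' => (i' : ℕ)) ?_ ?_
    · intro x hx
      simp only [Finset.mem_coe, Finset.mem_filter, Finset.mem_univ, true_and] at hx
      simp only [Finset.mem_coe, Finset.mem_range]
      exact hx.1
    · intro x _ y _ hxy
      exact Fin.ext hxy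
  simpa using this

lemma rankAbove_le (i : Fin m) : rankAbove c i ≤ m - 1 - (i : ℕ) := by
  classical
  unfold rankAbove
  have : (Finset.univ.filter fun i' : Fin m => i < i' ∧ c i' ≠ 0).card ≤ (Finset.Ioo (i:ℕ) m).card := by
    refine Finset.card_le_card_of_injOn (fun i' => (i' : ℕ)) ?_ ?_
    · intro x hx
      simp only [Finset.mem_coe, Finset.mem_filter, Finset.mem_univ, true_and] at hx
      simp only [Finset.mem_coe, Finset.mem_Ioo]
      exact ⟨hx.1, x.isLt⟩
    · intro x _ y _ hxy
      exact Fin.ext hxy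
  rw [Nat.card_Ioo] at this
  omega

lemma rankBelow_lt (i : Fin m) (hi : c i ≠ 0) : rankBelow c i < nzRows c := by
  classical
  apply Finset.card_lt_card
  constructor
  · intro x hx
    simp only [Finset.mem_filter, Finset.mem_univ, true_and] at hx ⊢
    exact hx.2
  · intro hsub
    have := hsub (by simp [hi] : i ∈ Finset.univ.filter fun i' : Fin m => c i' ≠ 0)
    simp at this

lemma rankAbove_lt (i : Fin m) (hi : c i ≠ 0) : rankAbove c i < nzRows c := by
  classical
  apply Finset.card_lt_card
  constructor
  · intro x hx
    simp only [Finset.mem_filter, Finset.mem_univ, true_and] at hx ⊢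
    exact hx.2
  · intro hsub
    have := hsub (by simp [hi] : i ∈ Finset.univ.filter fun i' : Fin m => c i' ≠ 0)
    simp at this

lemma rankBelow_mono {i i' : Fin m} (h : i < i') (hi : c i ≠ 0) :
    rankBelow c i < rankBelow c i' := by
  classical
  have hmem : i ∉ (Finset.univ.filter fun x : Fin m => x < i ∧ c x ≠ 0) := by
    simp
  have hsub : insert i (Finset.univ.filter fun x : Fin m => x < i ∧ c x ≠ 0) ⊆
      (Finset.univ.filter fun x : Fin m => x < i' ∧ c x ≠ 0) := by
    intro x hx
    rcases Finset.mem_insert.1 hx with h1 | h1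
    · subst h1; simp [h, hi]
    · simp only [Finset.mem_filter, Finset.mem_univ, true_and] at h1 ⊢
      exact ⟨lt_trans h1.1 h, h1.2⟩
  have := Finset.card_le_card hsub
  rw [Finset.card_insert_of_notMem hmem] at this
  unfold rankBelow
  omega

lemma rankAbove_anti {i i' : Fin m} (h : i < i') (hi' : c i' ≠ 0) :
    rankAbove c i' < rankAbove c i := by
  classical
  have hmem : i' ∉ (Finset.univ.filter fun x : Fin m => i' < x ∧ c x ≠ 0) := by
    simp
  have hsub : insert i' (Finset.univ.filter fun x : Fin m => i' < x ∧ c x ≠ 0) ⊆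
      (Finset.univ.filter fun x : Fin m => i < x ∧ c x ≠ 0) := by
    intro x hx
    rcases Finset.mem_insert.1 hx with h1 | h1
    · subst h1; simp [h, hi']
    · simp only [Finset.mem_filter, Finset.mem_univ, true_and] at h1 ⊢
      exact ⟨lt_trans h h1.1, h1.2⟩
  have := Finset.card_le_card hsub
  rw [Finset.card_insert_of_notMem hmem] at this
  unfold rankAbove
  omega

/-- key bound: entries below the count of nonzero rows above -/
lemma sep_upper {T : Filling m n c} (hS : RowsSeparated T) (i : Fin m) (j : Fin (c i)) :
    (T ⟨i, j⟩ : ℕ) + rankAbove c i < n := by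
  classical
  set t := (T ⟨i, j⟩ : ℕ) with ht
  unfold rankAbove
  have hcard : (Finset.univ.filter fun i' : Fin m => i < i' ∧ c i' ≠ 0).card ≤ (Finset.Ioo t n).card := by
    refine Finset.card_le_card_of_injOn
      (fun i' => if h : 0 < c i' then (T ⟨i', ⟨0, h⟩⟩ : ℕ) else 0) ?_ ?_
    · intro x hx
      simp only [Finset.mem_coe, Finset.mem_filter, Finset.mem_univ, true_and] at hx
      have h3 : 0 < c x := Nat.pos_of_ne_zero hx.2
      simp only [dif_pos h3, Finset.mem_coe, Finset.mem_Ioo]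
      exact ⟨hS i x hx.1 j ⟨0, h3⟩, (T ⟨x, ⟨0, h3⟩⟩).isLt⟩
    · intro x hx y hy hxy
      simp only [Finset.coe_filter, Set.mem_setOf_eq, Finset.mem_univ, true_and] at hx hy
      have hpx : 0 < c x := Nat.pos_of_ne_zero hx.2
      have hpy : 0 < c y := Nat.pos_of_ne_zero hy.2
      simp only [dif_pos hpx, dif_pos hpy] at hxy
      by_contra hne
      rcases lt_or_gt_of_ne hne with h | h
      · have h2 : (T ⟨x, ⟨0, hpx⟩⟩ : ℕ) < (T ⟨y, ⟨0, hpy⟩⟩ : ℕ) := hS x y h _ _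
        omega
      · have h2 : (T ⟨y, ⟨0, hpy⟩⟩ : ℕ) < (T ⟨x, ⟨0, hpx⟩⟩ : ℕ) := hS y x h _ _
        omega
  rw [Nat.card_Ioo] at hcard
  have htn : t < n := (T ⟨i, j⟩).isLt
  omega

lemma sep_lower {T : Filling m n c} (hS : RowsSeparated T) (i : Fin m) (j : Fin (c i)) :
    rankBelow c i ≤ (T ⟨i, j⟩ : ℕ) := by
  classical
  set t := (T ⟨i, j⟩ : ℕ) with ht
  unfold rankBelow
  have hcard : (Finset.univ.filter fun i' : Fin m => i' < i ∧ c i' ≠ 0).card ≤ (Finset.range t).card := by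
    refine Finset.card_le_card_of_injOn
      (fun i' => if h : 0 < c i' then (T ⟨i', ⟨0, h⟩⟩ : ℕ) else 0) ?_ ?_
    · intro x hx
      simp only [Finset.mem_coe, Finset.mem_filter, Finset.mem_univ, true_and] at hx
      have h3 : 0 < c x := Nat.pos_of_ne_zero hx.2
      simp only [dif_pos h3, Finset.mem_coe, Finset.mem_range]
      exact hS x i hx.1 ⟨0, h3⟩ j
    · intro x hx y hy hxy
      simp only [Finset.coe_filter, Set.mem_setOf_eq, Finset.mem_univ, true_and] at hx hy
      have hpx : 0 < c x := Nat.pos_of_ne_zero hx.2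
      have hpy : 0 < c y := Nat.pos_of_ne_zero hy.2
      simp only [dif_pos hpx, dif_pos hpy] at hxy
      by_contra hne
      rcases lt_or_gt_of_ne hne with h | h
      · have h2 : (T ⟨x, ⟨0, hpx⟩⟩ : ℕ) < (T ⟨y, ⟨0, hpy⟩⟩ : ℕ) := hS x y h _ _
        omega
      · have h2 : (T ⟨y, ⟨0, hpy⟩⟩ : ℕ) < (T ⟨x, ⟨0, hpx⟩⟩ : ℕ) := hS y x h _ _
        omega
  rw [Finset.card_range] at hcard
  exact hcard

end SepBounds
section Extreme

lemma nzRows_le {m : ℕ} (c : Fin m → ℕ) : nzRows c ≤ m := by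
  classical
  unfold nzRows
  calc (Finset.univ.filter fun i' : Fin m => c i' ≠ 0).card ≤ Finset.univ.card :=
        Finset.card_filter_le _ _
    _ = m := by simp

lemma exists_min_filling (n : ℕ) (c : Fin n → ℕ) :
    ∃ T : Filling n n c, RowsWeakDecr T ∧ RowsWeakIncr T ∧ RowsConstant T ∧ FlagUpper T ∧
      RowsSeparated T ∧ ∀ v : Fin n, wtF T v ≠ 0 → (v : ℕ) < nzRows c := by
  refine ⟨fun b => ⟨rankBelow c b.1, lt_of_le_of_lt (rankBelow_le b.1) b.1.isLt⟩,
    ?_, ?_, ?_, ?_, ?_, ?_⟩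
  · intro i j j' _; exact le_refl _
  · intro i j j' _; exact le_refl _
  · intro i j j'; rfl
  · intro i j; exact rankBelow_le i
  · intro i i' h j j'
    have hi : c i ≠ 0 := Nat.pos_iff_ne_zero.mp j.pos
    exact Fin.mk_lt_mk.mpr (rankBelow_mono h hi)
  · intro v hv
    obtain ⟨b, hb⟩ := wtF_support _ _ hv
    have hnz : c b.1 ≠ 0 := Nat.pos_iff_ne_zero.mp b.2.pos
    have := rankBelow_lt b.1 hnz
    rw [← hb]
    exact this

lemma exists_max_filling (n : ℕ) (c : Fin n → ℕ) :
    ∃ T : Filling n n c, RowsWeakDecr T ∧ RowsWeakIncr T ∧ RowsConstant T ∧ FlagLower T ∧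
      RowsSeparated T ∧ ∀ v : Fin n, wtF T v ≠ 0 → n - nzRows c ≤ (v : ℕ) := by
  refine ⟨fun b => ⟨n - 1 - rankAbove c b.1, by have := b.1.isLt; omega⟩,
    ?_, ?_, ?_, ?_, ?_, ?_⟩
  · intro i j j' _; exact le_refl _
  · intro i j j' _; exact le_refl _
  · intro i j j'; rfl
  · intro i j
    have h1 := rankAbove_le (c := c) i
    have h2 := i.isLt
    simp only []
    omega
  · intro i i' h j j'
    have hi' : c i' ≠ 0 := Nat.pos_iff_ne_zero.mp j'.pos
    have h1 := rankAbove_anti h hi'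
    have h2 := rankAbove_le (c := c) i
    have h3 := i.isLt
    exact Fin.mk_lt_mk.mpr
      (show n - 1 - rankAbove c i < n - 1 - rankAbove c i' by omega)
  · intro v hv
    obtain ⟨b, hb⟩ := wtF_support _ _ hv
    have hnz : c b.1 ≠ 0 := Nat.pos_iff_ne_zero.mp b.2.pos
    have h1 := rankAbove_lt b.1 hnz
    have h2 := nzRows_le c
    have h3 := b.1.isLt
    rw [← hb]
    simp only []
    omega

lemma support_low_of_flagUpper {n : ℕ} {a : Fin n → ℕ} {T : Filling n n a}
    (hF : FlagUpper T) {t : ℕ} (hwt : ∀ v : Fin n, wtF T v ≠ 0 → t ≤ (v : ℕ)) :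
    ∀ i : Fin n, a i ≠ 0 → t ≤ (i : ℕ) := by
  intro i hi
  have h0 : 0 < a i := Nat.pos_of_ne_zero hi
  have h1 := hwt (T ⟨i, ⟨0, h0⟩⟩) (wtF_pos T ⟨i, ⟨0, h0⟩⟩)
  have h2 := hF i ⟨0, h0⟩
  omega

lemma support_hi_of_flagLower {n : ℕ} {b : Fin n → ℕ} {T : Filling n n b}
    (hF : FlagLower T) {t : ℕ} (hwt : ∀ v : Fin n, wtF T v ≠ 0 → (v : ℕ) < t) :
    ∀ i : Fin n, b i ≠ 0 → (i : ℕ) < t := by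
  intro i hi
  have h0 : 0 < b i := Nat.pos_of_ne_zero hi
  have h1 := hwt (T ⟨i, ⟨0, h0⟩⟩) (wtF_pos T ⟨i, ⟨0, h0⟩⟩)
  have h2 := hF i ⟨0, h0⟩
  omega

lemma nz_le_of_hi {n s : ℕ} {b : Fin n → ℕ} (h : ∀ i : Fin n, b i ≠ 0 → (i : ℕ) < s) :
    nzRows b ≤ s := by
  classical
  unfold nzRows
  calc (Finset.univ.filter fun i : Fin n => b i ≠ 0).card ≤ (Finset.range s).card := by
        refine Finset.card_le_card_of_injOn (fun i => (i : ℕ)) ?_ ?_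
        · intro x hx
          simp only [Finset.mem_coe, Finset.mem_filter, Finset.mem_univ, true_and] at hx
          simp only [Finset.mem_coe, Finset.mem_range]
          exact h x hx
        · intro x _ y _ hxy; exact Fin.ext hxy
    _ = s := Finset.card_range s

lemma nz_le_of_low {n t : ℕ} {a : Fin n → ℕ} (h : ∀ i : Fin n, a i ≠ 0 → t ≤ (i : ℕ)) :
    nzRows a ≤ n - t := by
  classical
  unfold nzRows
  calc (Finset.univ.filter fun i : Fin n => a i ≠ 0).card ≤ (Finset.Ico t n).card := by
        refine Finset.card_le_card_of_injOn (fun i => (i : ℕ)) ?_ ?_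
        · intro x hx
          simp only [Finset.mem_coe, Finset.mem_filter, Finset.mem_univ, true_and] at hx
          simp only [Finset.mem_coe, Finset.mem_Ico]
          exact ⟨h x hx, x.isLt⟩
        · intro x _ y _ hxy; exact Fin.ext hxy
    _ = n - t := Nat.card_Ico t n

lemma card_ge_filter {n t : ℕ} (ht : t ≤ n) :
    (Finset.univ.filter fun i : Fin n => t ≤ (i : ℕ)).card = n - t := by
  classical
  have : (Finset.univ.filter fun i : Fin n => t ≤ (i:ℕ)) =
      Finset.univ.map ⟨fun k : Fin (n-t) => (⟨t + k, by omega⟩ : Fin n), by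
        intro x y hxy; ext; have := Fin.val_eq_of_eq hxy; simp at this; omega⟩ := by
    ext i
    simp only [Finset.mem_filter, Finset.mem_univ, true_and, Finset.mem_map,
      Function.Embedding.coeFn_mk]
    constructor
    · intro hi; exact ⟨⟨(i:ℕ) - t, by omega⟩, by ext; show t + ((i:ℕ) - t) = i; omega⟩
    · rintro ⟨k, rfl⟩; show t ≤ t + (k:ℕ); omega
  rw [this]
  simp

/-- The central support argument. -/
lemma support_top_packed {n : ℕ} {a b : Fin n → ℕ}
    (Pa : Filling n n a → Prop) (Pb : Filling n n b → Prop)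
    (hPaF : ∀ T, Pa T → FlagUpper T) (hPbF : ∀ T, Pb T → FlagLower T)
    (hmin : ∃ T : Filling n n a, Pa T ∧ ∀ v : Fin n, wtF T v ≠ 0 → (v : ℕ) < nzRows a)
    (hmax : ∃ T : Filling n n b, Pb T ∧ ∀ v : Fin n, wtF T v ≠ 0 → n - nzRows b ≤ (v : ℕ))
    (h : genfun a Pa = genfun b Pb) :
    ∀ i : Fin n, a i ≠ 0 ↔ n - nzRows a ≤ (i : ℕ) := by
  classical
  obtain ⟨Tmax, hTmax, hsuppmax⟩ := hmax
  obtain ⟨Tmin, hTmin, hsuppmin⟩ := hmin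
  -- transfer Tmax's weight to a filling of a
  have h1 : ∃ T : Filling n n a, Pa T ∧ wtF T = wtF Tmax := by
    rw [← mem_genfun_iff a Pa (wtF Tmax), h]
    exact (mem_genfun_iff b Pb (wtF Tmax)).mpr ⟨Tmax, hTmax, rfl⟩
  obtain ⟨Ta, hTa, hwa⟩ := h1
  have hlowa : ∀ i : Fin n, a i ≠ 0 → n - nzRows b ≤ (i : ℕ) :=
    support_low_of_flagUpper (hPaF Ta hTa)
      (fun v hv => hsuppmax v (by rwa [hwa] at hv))
  -- transfer Tmin's weight to a filling of b
  have h2 : ∃ T : Filling n n b, Pb T ∧ wtF T = wtF Tmin := by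
    rw [← mem_genfun_iff b Pb (wtF Tmin), ← h]
    exact (mem_genfun_iff a Pa (wtF Tmin)).mpr ⟨Tmin, hTmin, rfl⟩
  obtain ⟨Tb, hTb, hwb⟩ := h2
  have hhib : ∀ i : Fin n, b i ≠ 0 → (i : ℕ) < nzRows a :=
    support_hi_of_flagLower (hPbF Tb hTb)
      (fun v hv => hsuppmin v (by rwa [hwb] at hv))
  -- counting
  have hLb : nzRows b ≤ nzRows a := nz_le_of_hi hhib
  have hLa : nzRows a ≤ n - (n - nzRows b) := nz_le_of_low hlowa
  have hbn : nzRows b ≤ n := nzRows_le b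
  have han : nzRows a ≤ n := nzRows_le a
  have hEq : nzRows a = nzRows b := by omega
  -- subset of equal card
  set L := nzRows a with hL
  have hsub : (Finset.univ.filter fun i : Fin n => a i ≠ 0) ⊆
      (Finset.univ.filter fun i : Fin n => n - L ≤ (i : ℕ)) := by
    intro x hx
    simp only [Finset.mem_filter, Finset.mem_univ, true_and] at hx ⊢
    have := hlowa x hx
    omega
  have hcards : (Finset.univ.filter fun i : Fin n => n - L ≤ (i : ℕ)).card ≤
      (Finset.univ.filter fun i : Fin n => a i ≠ 0).card := by
    rw [card_ge_filter (by omega)]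
    have : (Finset.univ.filter fun i : Fin n => a i ≠ 0).card = L := rfl
    omega
  have hfeq := Finset.eq_of_subset_of_card_le hsub hcards
  intro i
  constructor
  · intro hi
    have : i ∈ (Finset.univ.filter fun i : Fin n => a i ≠ 0) := by simp [hi]
    rw [hfeq] at this
    simpa using this
  · intro hi
    have : i ∈ (Finset.univ.filter fun i : Fin n => n - L ≤ (i : ℕ)) :=
      Finset.mem_filter.mpr ⟨Finset.mem_univ i, hi⟩
    rw [← hfeq] at this
    simpa using this

end Extreme

lemma fill_congr {m n : ℕ} {c : Fin m → ℕ} (T : Filling m n c) {i i' : Fin m}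
    (h : i = i') {j : Fin (c i)} {j' : Fin (c i')} (hj : (j : ℕ) = (j' : ℕ)) :
    T ⟨i, j⟩ = T ⟨i', j'⟩ := by
  subst h
  exact congrArg T (congrArg (Sigma.mk i) (Fin.ext hj))

lemma pad_equiv (n L off : ℕ) (hoffL : off + L ≤ n) (α : List ℕ) (hlen : α.length = L)
    (a : Fin n → ℕ)
    (ha0 : ∀ i : Fin n, ¬(off ≤ (i : ℕ) ∧ (i : ℕ) < off + L) → a i = 0)
    (haK : ∀ (k : ℕ) (hk : k < α.length), a ⟨off + k, by omega⟩ = α.get ⟨k, hk⟩) :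
    ∃ e : ((k : Fin α.length) × Fin (cshape α k)) ≃ ((i : Fin n) × Fin (a i)),
      ∀ (k : Fin α.length) (j' : Fin (cshape α k)),
        ((e ⟨k, j'⟩).1 : ℕ) = off + (k : ℕ) ∧ ((e ⟨k, j'⟩).2 : ℕ) = (j' : ℕ) := by
  have hrow : ∀ k : Fin α.length, a ⟨off + (k : ℕ), by omega⟩ = cshape α k := by
    intro k
    rw [haK (k : ℕ) k.isLt]
    unfold cshape
    congr 1
  have hmem : ∀ i : Fin n, a i ≠ 0 → off ≤ (i : ℕ) ∧ (i : ℕ) < off + L := by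
    intro i hi
    by_contra hcon
    exact hi (ha0 i hcon)
  have hcol : ∀ (i : Fin n) (hnz : a i ≠ 0),
      a i = cshape α ⟨(i : ℕ) - off, by have := hmem i hnz; omega⟩ := by
    intro i hnz
    have hm := hmem i hnz
    have h1 := hrow ⟨(i : ℕ) - off, by omega⟩
    rw [← h1]
    exact congrArg a (Fin.ext (by simp; omega)).symm
  refine ⟨⟨fun p => ⟨⟨off + (p.1 : ℕ), by have := p.1.isLt; omega⟩,
      ⟨(p.2 : ℕ), by rw [hrow p.1]; exact p.2.isLt⟩⟩,
    fun b =>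
      have hnz : a b.1 ≠ 0 := Nat.pos_iff_ne_zero.mp b.2.pos
      ⟨⟨(b.1 : ℕ) - off, by have := hmem b.1 hnz; omega⟩,
        ⟨(b.2 : ℕ), by rw [← hcol b.1 hnz]; exact b.2.isLt⟩⟩,
    ?_, ?_⟩, ?_⟩
  · intro p
    apply Sigma.ext
    case fst => exact Fin.ext (by simp)
    case snd =>
      rw [Fin.heq_ext_iff (congrArg (cshape α) (Fin.ext (by simp)))]
  · intro b
    have hnz : a b.1 ≠ 0 := Nat.pos_iff_ne_zero.mp b.2.pos
    have hm := hmem b.1 hnz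
    apply Sigma.ext
    case fst => exact Fin.ext (by simp; omega)
    case snd =>
      rw [Fin.heq_ext_iff (congrArg a (Fin.ext (by simp; omega)))]
  · intro k j'
    exact ⟨rfl, rfl⟩


section Flags

lemma card_lt_filter {n t : ℕ} (ht : t ≤ n) :
    (Finset.univ.filter fun i : Fin n => (i : ℕ) < t).card = t := by
  classical
  have h1 := Finset.card_filter_add_card_filter_not
    (s := (Finset.univ : Finset (Fin n))) (p := fun i : Fin n => t ≤ (i : ℕ))
  have h2 : (Finset.univ.filter fun i : Fin n => ¬ t ≤ (i : ℕ)) =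
      (Finset.univ.filter fun i : Fin n => (i : ℕ) < t) := by
    ext x; simp [Nat.not_le]
  rw [card_ge_filter ht, h2] at h1
  simp at h1
  omega

lemma flagUpper_top {n L : ℕ} (hL : L ≤ n) {a : Fin n → ℕ}
    (hnz : ∀ i : Fin n, n - L ≤ (i : ℕ) → a i ≠ 0)
    (ha0 : ∀ i : Fin n, (i : ℕ) < n - L → a i = 0)
    {T : Filling n n a} (hS : RowsSeparated T) : FlagUpper T := by
  intro i j
  have hnz0 : a i ≠ 0 := Nat.pos_iff_ne_zero.mp j.pos
  have hi : n - L ≤ (i : ℕ) := by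
    by_contra hcon
    exact hnz0 (ha0 i (by omega))
  have hfe : (Finset.univ.filter fun i' : Fin n => i < i' ∧ a i' ≠ 0) =
      (Finset.univ.filter fun i' : Fin n => (i : ℕ) + 1 ≤ (i' : ℕ)) := by
    ext x
    simp only [Finset.mem_filter, Finset.mem_univ, true_and]
    constructor
    · rintro ⟨h1, _⟩
      have := Fin.lt_def.mp h1
      omega
    · intro h1
      exact ⟨Fin.lt_def.mpr (by omega), hnz x (by omega)⟩
  have hcard : rankAbove a i = n - ((i : ℕ) + 1) := by
    unfold rankAbove
    rw [hfe, card_ge_filter (by have := i.isLt; omega)]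
  have hsu := sep_upper hS i j
  have := i.isLt
  omega

lemma flagLower_bottom {n L : ℕ} (hL : L ≤ n) {b : Fin n → ℕ}
    (hnz : ∀ i : Fin n, (i : ℕ) < L → b i ≠ 0)
    (hb0 : ∀ i : Fin n, L ≤ (i : ℕ) → b i = 0)
    {T : Filling n n b} (hS : RowsSeparated T) : FlagLower T := by
  intro i j
  have hnz0 : b i ≠ 0 := Nat.pos_iff_ne_zero.mp j.pos
  have hi : (i : ℕ) < L := by
    by_contra hcon
    exact hnz0 (hb0 i (by omega))
  have hfe : (Finset.univ.filter fun i' : Fin n => i' < i ∧ b i' ≠ 0) =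
      (Finset.univ.filter fun i' : Fin n => (i' : ℕ) < (i : ℕ)) := by
    ext x
    simp only [Finset.mem_filter, Finset.mem_univ, true_and]
    constructor
    · rintro ⟨h1, _⟩
      exact Fin.lt_def.mp h1
    · intro h1
      exact ⟨Fin.lt_def.mpr h1, hnz x (by omega)⟩
  have hcard : rankBelow b i = (i : ℕ) := by
    unfold rankBelow
    rw [hfe, card_lt_filter (le_of_lt i.isLt)]
  have hsl := sep_lower hS i j
  omega

end Flags
section PadTransfer

lemma pad_fs (n L : ℕ) (hL : L ≤ n) (α : List ℕ) (hlen : α.length = L)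
    (hpos : ∀ x ∈ α, 0 < x) (a : Fin n → ℕ)
    (ha0 : ∀ i : Fin n, ¬(n - L ≤ (i : ℕ) ∧ (i : ℕ) < (n - L) + L) → a i = 0)
    (haK : ∀ (k : ℕ) (hk : k < α.length), a ⟨(n - L) + k, by omega⟩ = α.get ⟨k, hk⟩) :
    genfun (n := n) a (fun T => RowsWeakDecr T ∧ FlagUpper T ∧ RowsSeparated T)
      = genfun (n := n) (cshape α) (fun T => RowsWeakDecr T ∧ RowsSeparated T)
    ∧ genfun (n := n) a
        (fun T => RowsWeakDecr T ∧ FlagUpper T ∧ RowsSeparated T ∧ RowsConstant T)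
      = genfun (n := n) (cshape α)
        (fun T => RowsWeakDecr T ∧ RowsSeparated T ∧ RowsConstant T) := by
  classical
  obtain ⟨e, he⟩ := pad_equiv n L (n - L) (by omega) α hlen a ha0 haK
  set off := n - L with hoff
  have hmem : ∀ i : Fin n, a i ≠ 0 → off ≤ (i : ℕ) ∧ (i : ℕ) < off + L := by
    intro i hi; by_contra hcon; exact hi (ha0 i hcon)
  have hrow : ∀ k : Fin α.length, a ⟨off + (k : ℕ), by have := k.isLt; omega⟩ = cshape α k := by
    intro k; rw [haK (k : ℕ) k.isLt]; unfold cshape; congr 1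
  have hnzk : ∀ i : Fin n, off ≤ (i : ℕ) → a i ≠ 0 := by
    intro i hi
    have hik : (i : ℕ) - off < α.length := by have := i.isLt; omega
    have h1 := hrow ⟨(i : ℕ) - off, hik⟩
    have h2 : (⟨off + ((i : ℕ) - off), by have := i.isLt; omega⟩ : Fin n) = i :=
      Fin.ext (by simp; omega)
    rw [h2] at h1
    rw [h1]
    unfold cshape
    have := hpos (α.get ⟨(i : ℕ) - off, hik⟩) (List.get_mem α _)
    omega
  have ha00 : ∀ i : Fin n, (i : ℕ) < n - L → a i = 0 := by
    intro i hi; exact ha0 i (by omega)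
  have hTS : ∀ (T : Filling n n a) (k : Fin α.length) (j' : Fin (cshape α k))
      (i : Fin n) (j : Fin (a i)),
      (i : ℕ) = off + (k : ℕ) → (j : ℕ) = (j' : ℕ) → T (e ⟨k, j'⟩) = T ⟨i, j⟩ := by
    intro T k j' i j h1 h2
    exact fill_congr T (Fin.ext ((he k j').1.trans (by omega)))
      ((he k j').2.trans (by omega))
  -- transfers
  have hDecr : ∀ T : Filling n n a,
      RowsWeakDecr T ↔ RowsWeakDecr (fun b => T (e b)) := by
    intro T
    constructor
    · intro hD k j1 j2 hle
      have hai := hrow k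
      have hk : off + (k : ℕ) < n := by have := k.isLt; omega
      set i : Fin n := ⟨off + (k : ℕ), hk⟩ with hi
      have hj1 : (j1 : ℕ) < a i := by rw [hai]; exact j1.isLt
      have hj2 : (j2 : ℕ) < a i := by rw [hai]; exact j2.isLt
      rw [show (fun b => T (e b)) ⟨k, j1⟩ = T ⟨i, ⟨(j1 : ℕ), hj1⟩⟩ from
        hTS T k j1 i ⟨(j1 : ℕ), hj1⟩ rfl rfl]
      rw [show (fun b => T (e b)) ⟨k, j2⟩ = T ⟨i, ⟨(j2 : ℕ), hj2⟩⟩ from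
        hTS T k j2 i ⟨(j2 : ℕ), hj2⟩ rfl rfl]
      exact hD i _ _ (Fin.mk_le_mk.mpr (Fin.le_def.mp hle))
    · intro hD i j1 j2 hle
      have hnz : a i ≠ 0 := Nat.pos_iff_ne_zero.mp j1.pos
      have hm := hmem i hnz
      have hik : (i : ℕ) - off < α.length := by omega
      set k : Fin α.length := ⟨(i : ℕ) - off, hik⟩ with hk
      have hai : a i = cshape α k := by
        have h1 := hrow k
        have h2 : (⟨off + ((i : ℕ) - off), by have := i.isLt; omega⟩ : Fin n) = i :=
          Fin.ext (by simp; omega)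
        rw [h2] at h1
        exact h1
      have hj1 : (j1 : ℕ) < cshape α k := by rw [← hai]; exact j1.isLt
      have hj2 : (j2 : ℕ) < cshape α k := by rw [← hai]; exact j2.isLt
      rw [show T ⟨i, j1⟩ = (fun b => T (e b)) ⟨k, ⟨(j1 : ℕ), hj1⟩⟩ from
        (hTS T k ⟨(j1 : ℕ), hj1⟩ i j1 (by simp [hk]; omega) rfl).symm]
      rw [show T ⟨i, j2⟩ = (fun b => T (e b)) ⟨k, ⟨(j2 : ℕ), hj2⟩⟩ from
        (hTS T k ⟨(j2 : ℕ), hj2⟩ i j2 (by simp [hk]; omega) rfl).symm]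
      exact hD k _ _ (Fin.mk_le_mk.mpr (Fin.le_def.mp hle))
  have hSep : ∀ T : Filling n n a,
      RowsSeparated T ↔ RowsSeparated (fun b => T (e b)) := by
    intro T
    constructor
    · intro hD k1 k2 hlt j1 j2
      have hk1 : off + (k1 : ℕ) < n := by have := k1.isLt; omega
      have hk2 : off + (k2 : ℕ) < n := by have := k2.isLt; omega
      set i1 : Fin n := ⟨off + (k1 : ℕ), hk1⟩
      set i2 : Fin n := ⟨off + (k2 : ℕ), hk2⟩
      have hj1 : (j1 : ℕ) < a i1 := by rw [hrow k1]; exact j1.isLt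
      have hj2 : (j2 : ℕ) < a i2 := by rw [hrow k2]; exact j2.isLt
      rw [show (fun b => T (e b)) ⟨k1, j1⟩ = T ⟨i1, ⟨(j1 : ℕ), hj1⟩⟩ from
        hTS T k1 j1 i1 ⟨(j1 : ℕ), hj1⟩ rfl rfl]
      rw [show (fun b => T (e b)) ⟨k2, j2⟩ = T ⟨i2, ⟨(j2 : ℕ), hj2⟩⟩ from
        hTS T k2 j2 i2 ⟨(j2 : ℕ), hj2⟩ rfl rfl]
      exact hD i1 i2 (Fin.mk_lt_mk.mpr (by have := Fin.lt_def.mp hlt; omega)) _ _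
    · intro hD i1 i2 hlt j1 j2
      have hnz1 : a i1 ≠ 0 := Nat.pos_iff_ne_zero.mp j1.pos
      have hnz2 : a i2 ≠ 0 := Nat.pos_iff_ne_zero.mp j2.pos
      have hm1 := hmem i1 hnz1
      have hm2 := hmem i2 hnz2
      have hik1 : (i1 : ℕ) - off < α.length := by omega
      have hik2 : (i2 : ℕ) - off < α.length := by omega
      set k1 : Fin α.length := ⟨(i1 : ℕ) - off, hik1⟩ with hk1
      set k2 : Fin α.length := ⟨(i2 : ℕ) - off, hik2⟩ with hk2
      have hai1 : a i1 = cshape α k1 := by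
        have h1 := hrow k1
        have h2 : (⟨off + ((i1 : ℕ) - off), by have := i1.isLt; omega⟩ : Fin n) = i1 :=
          Fin.ext (by simp; omega)
        rw [h2] at h1; exact h1
      have hai2 : a i2 = cshape α k2 := by
        have h1 := hrow k2
        have h2 : (⟨off + ((i2 : ℕ) - off), by have := i2.isLt; omega⟩ : Fin n) = i2 :=
          Fin.ext (by simp; omega)
        rw [h2] at h1; exact h1
      have hj1 : (j1 : ℕ) < cshape α k1 := by rw [← hai1]; exact j1.isLt
      have hj2 : (j2 : ℕ) < cshape α k2 := by rw [← hai2]; exact j2.isLt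
      rw [show T ⟨i1, j1⟩ = (fun b => T (e b)) ⟨k1, ⟨(j1 : ℕ), hj1⟩⟩ from
        (hTS T k1 ⟨(j1 : ℕ), hj1⟩ i1 j1 (by simp [hk1]; omega) rfl).symm]
      rw [show T ⟨i2, j2⟩ = (fun b => T (e b)) ⟨k2, ⟨(j2 : ℕ), hj2⟩⟩ from
        (hTS T k2 ⟨(j2 : ℕ), hj2⟩ i2 j2 (by simp [hk2]; omega) rfl).symm]
      refine hD k1 k2 (Fin.mk_lt_mk.mpr ?_) _ _
      have := Fin.lt_def.mp hlt
      omega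
  have hConst : ∀ T : Filling n n a,
      RowsConstant T ↔ RowsConstant (fun b => T (e b)) := by
    intro T
    constructor
    · intro hD k j1 j2
      have hk : off + (k : ℕ) < n := by have := k.isLt; omega
      set i : Fin n := ⟨off + (k : ℕ), hk⟩
      have hj1 : (j1 : ℕ) < a i := by rw [hrow k]; exact j1.isLt
      have hj2 : (j2 : ℕ) < a i := by rw [hrow k]; exact j2.isLt
      rw [show (fun b => T (e b)) ⟨k, j1⟩ = T ⟨i, ⟨(j1 : ℕ), hj1⟩⟩ from
        hTS T k j1 i ⟨(j1 : ℕ), hj1⟩ rfl rfl]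
      rw [show (fun b => T (e b)) ⟨k, j2⟩ = T ⟨i, ⟨(j2 : ℕ), hj2⟩⟩ from
        hTS T k j2 i ⟨(j2 : ℕ), hj2⟩ rfl rfl]
      exact hD i _ _
    · intro hD i j1 j2
      have hnz : a i ≠ 0 := Nat.pos_iff_ne_zero.mp j1.pos
      have hm := hmem i hnz
      have hik : (i : ℕ) - off < α.length := by omega
      set k : Fin α.length := ⟨(i : ℕ) - off, hik⟩ with hk
      have hai : a i = cshape α k := by
        have h1 := hrow k
        have h2 : (⟨off + ((i : ℕ) - off), by have := i.isLt; omega⟩ : Fin n) = i :=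
          Fin.ext (by simp; omega)
        rw [h2] at h1; exact h1
      have hj1 : (j1 : ℕ) < cshape α k := by rw [← hai]; exact j1.isLt
      have hj2 : (j2 : ℕ) < cshape α k := by rw [← hai]; exact j2.isLt
      rw [show T ⟨i, j1⟩ = (fun b => T (e b)) ⟨k, ⟨(j1 : ℕ), hj1⟩⟩ from
        (hTS T k ⟨(j1 : ℕ), hj1⟩ i j1 (by simp [hk]; omega) rfl).symm]
      rw [show T ⟨i, j2⟩ = (fun b => T (e b)) ⟨k, ⟨(j2 : ℕ), hj2⟩⟩ from
        (hTS T k ⟨(j2 : ℕ), hj2⟩ i j2 (by simp [hk]; omega) rfl).symm]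
      exact hD k _ _
  constructor
  · refine genfun_equiv e _ _ ?_
    intro T
    constructor
    · rintro ⟨h1, _, h3⟩
      exact ⟨(hDecr T).mp h1, (hSep T).mp h3⟩
    · rintro ⟨h1, h3⟩
      have hSepT := (hSep T).mpr h3
      exact ⟨(hDecr T).mpr h1, flagUpper_top hL hnzk ha00 hSepT, hSepT⟩
  · refine genfun_equiv e _ _ ?_
    intro T
    constructor
    · rintro ⟨h1, _, h3, h4⟩
      exact ⟨(hDecr T).mp h1, (hSep T).mp h3, (hConst T).mp h4⟩
    · rintro ⟨h1, h3, h4⟩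
      have hSepT := (hSep T).mpr h3
      exact ⟨(hDecr T).mpr h1, flagUpper_top hL hnzk ha00 hSepT, hSepT, (hConst T).mpr h4⟩

lemma pad_yfs (n L : ℕ) (hL : L ≤ n) (α : List ℕ) (hlen : α.length = L)
    (hpos : ∀ x ∈ α, 0 < x) (a : Fin n → ℕ)
    (ha0 : ∀ i : Fin n, ¬(0 ≤ (i : ℕ) ∧ (i : ℕ) < 0 + L) → a i = 0)
    (haK : ∀ (k : ℕ) (hk : k < α.length), a ⟨0 + k, by omega⟩ = α.get ⟨k, hk⟩) :
    genfun (n := n) a (fun T => RowsWeakIncr T ∧ FlagLower T ∧ RowsSeparated T)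
      = genfun (n := n) (cshape α) (fun T => RowsWeakIncr T ∧ RowsSeparated T)
    ∧ genfun (n := n) a
        (fun T => RowsWeakIncr T ∧ FlagLower T ∧ RowsSeparated T ∧ RowsConstant T)
      = genfun (n := n) (cshape α)
        (fun T => RowsWeakIncr T ∧ RowsSeparated T ∧ RowsConstant T) := by
  classical
  obtain ⟨e, he⟩ := pad_equiv n L 0 (by omega) α hlen a ha0 haK
  set off := 0 with hoff
  have hmem : ∀ i : Fin n, a i ≠ 0 → off ≤ (i : ℕ) ∧ (i : ℕ) < off + L := by
    intro i hi; by_contra hcon; exact hi (ha0 i hcon)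
  have hrow : ∀ k : Fin α.length, a ⟨off + (k : ℕ), by have := k.isLt; omega⟩ = cshape α k := by
    intro k; rw [haK (k : ℕ) k.isLt]; unfold cshape; congr 1
  have hnzk : ∀ i : Fin n, (i : ℕ) < L → a i ≠ 0 := by
    intro i hi
    have hik : (i : ℕ) - off < α.length := by omega
    have h1 := hrow ⟨(i : ℕ) - off, hik⟩
    have h2 : (⟨off + ((i : ℕ) - off), by have := i.isLt; omega⟩ : Fin n) = i :=
      Fin.ext (by simp; omega)
    rw [h2] at h1
    rw [h1]
    unfold cshape
    have := hpos (α.get ⟨(i : ℕ) - off, hik⟩) (List.get_mem α _)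
    omega
  have ha00 : ∀ i : Fin n, L ≤ (i : ℕ) → a i = 0 := by
    intro i hi; exact ha0 i (by omega)
  have hTS : ∀ (T : Filling n n a) (k : Fin α.length) (j' : Fin (cshape α k))
      (i : Fin n) (j : Fin (a i)),
      (i : ℕ) = off + (k : ℕ) → (j : ℕ) = (j' : ℕ) → T (e ⟨k, j'⟩) = T ⟨i, j⟩ := by
    intro T k j' i j h1 h2
    exact fill_congr T (Fin.ext ((he k j').1.trans (by omega)))
      ((he k j').2.trans (by omega))
  -- transfers
  have hIncr : ∀ T : Filling n n a,
      RowsWeakIncr T ↔ RowsWeakIncr (fun b => T (e b)) := by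
    intro T
    constructor
    · intro hD k j1 j2 hle
      have hai := hrow k
      have hk : off + (k : ℕ) < n := by have := k.isLt; omega
      set i : Fin n := ⟨off + (k : ℕ), hk⟩ with hi
      have hj1 : (j1 : ℕ) < a i := by rw [hai]; exact j1.isLt
      have hj2 : (j2 : ℕ) < a i := by rw [hai]; exact j2.isLt
      rw [show (fun b => T (e b)) ⟨k, j1⟩ = T ⟨i, ⟨(j1 : ℕ), hj1⟩⟩ from
        hTS T k j1 i ⟨(j1 : ℕ), hj1⟩ rfl rfl]
      rw [show (fun b => T (e b)) ⟨k, j2⟩ = T ⟨i, ⟨(j2 : ℕ), hj2⟩⟩ from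
        hTS T k j2 i ⟨(j2 : ℕ), hj2⟩ rfl rfl]
      exact hD i _ _ (Fin.mk_le_mk.mpr (Fin.le_def.mp hle))
    · intro hD i j1 j2 hle
      have hnz : a i ≠ 0 := Nat.pos_iff_ne_zero.mp j1.pos
      have hm := hmem i hnz
      have hik : (i : ℕ) - off < α.length := by omega
      set k : Fin α.length := ⟨(i : ℕ) - off, hik⟩ with hk
      have hai : a i = cshape α k := by
        have h1 := hrow k
        have h2 : (⟨off + ((i : ℕ) - off), by have := i.isLt; omega⟩ : Fin n) = i :=
          Fin.ext (by simp; omega)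
        rw [h2] at h1
        exact h1
      have hj1 : (j1 : ℕ) < cshape α k := by rw [← hai]; exact j1.isLt
      have hj2 : (j2 : ℕ) < cshape α k := by rw [← hai]; exact j2.isLt
      rw [show T ⟨i, j1⟩ = (fun b => T (e b)) ⟨k, ⟨(j1 : ℕ), hj1⟩⟩ from
        (hTS T k ⟨(j1 : ℕ), hj1⟩ i j1 (by simp [hk]; omega) rfl).symm]
      rw [show T ⟨i, j2⟩ = (fun b => T (e b)) ⟨k, ⟨(j2 : ℕ), hj2⟩⟩ from
        (hTS T k ⟨(j2 : ℕ), hj2⟩ i j2 (by simp [hk]; omega) rfl).symm]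
      exact hD k _ _ (Fin.mk_le_mk.mpr (Fin.le_def.mp hle))
  have hSep : ∀ T : Filling n n a,
      RowsSeparated T ↔ RowsSeparated (fun b => T (e b)) := by
    intro T
    constructor
    · intro hD k1 k2 hlt j1 j2
      have hk1 : off + (k1 : ℕ) < n := by have := k1.isLt; omega
      have hk2 : off + (k2 : ℕ) < n := by have := k2.isLt; omega
      set i1 : Fin n := ⟨off + (k1 : ℕ), hk1⟩
      set i2 : Fin n := ⟨off + (k2 : ℕ), hk2⟩
      have hj1 : (j1 : ℕ) < a i1 := by rw [hrow k1]; exact j1.isLt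
      have hj2 : (j2 : ℕ) < a i2 := by rw [hrow k2]; exact j2.isLt
      rw [show (fun b => T (e b)) ⟨k1, j1⟩ = T ⟨i1, ⟨(j1 : ℕ), hj1⟩⟩ from
        hTS T k1 j1 i1 ⟨(j1 : ℕ), hj1⟩ rfl rfl]
      rw [show (fun b => T (e b)) ⟨k2, j2⟩ = T ⟨i2, ⟨(j2 : ℕ), hj2⟩⟩ from
        hTS T k2 j2 i2 ⟨(j2 : ℕ), hj2⟩ rfl rfl]
      exact hD i1 i2 (Fin.mk_lt_mk.mpr (by have := Fin.lt_def.mp hlt; omega)) _ _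
    · intro hD i1 i2 hlt j1 j2
      have hnz1 : a i1 ≠ 0 := Nat.pos_iff_ne_zero.mp j1.pos
      have hnz2 : a i2 ≠ 0 := Nat.pos_iff_ne_zero.mp j2.pos
      have hm1 := hmem i1 hnz1
      have hm2 := hmem i2 hnz2
      have hik1 : (i1 : ℕ) - off < α.length := by omega
      have hik2 : (i2 : ℕ) - off < α.length := by omega
      set k1 : Fin α.length := ⟨(i1 : ℕ) - off, hik1⟩ with hk1
      set k2 : Fin α.length := ⟨(i2 : ℕ) - off, hik2⟩ with hk2
      have hai1 : a i1 = cshape α k1 := by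
        have h1 := hrow k1
        have h2 : (⟨off + ((i1 : ℕ) - off), by have := i1.isLt; omega⟩ : Fin n) = i1 :=
          Fin.ext (by simp; omega)
        rw [h2] at h1; exact h1
      have hai2 : a i2 = cshape α k2 := by
        have h1 := hrow k2
        have h2 : (⟨off + ((i2 : ℕ) - off), by have := i2.isLt; omega⟩ : Fin n) = i2 :=
          Fin.ext (by simp; omega)
        rw [h2] at h1; exact h1
      have hj1 : (j1 : ℕ) < cshape α k1 := by rw [← hai1]; exact j1.isLt
      have hj2 : (j2 : ℕ) < cshape α k2 := by rw [← hai2]; exact j2.isLt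
      rw [show T ⟨i1, j1⟩ = (fun b => T (e b)) ⟨k1, ⟨(j1 : ℕ), hj1⟩⟩ from
        (hTS T k1 ⟨(j1 : ℕ), hj1⟩ i1 j1 (by simp [hk1]; omega) rfl).symm]
      rw [show T ⟨i2, j2⟩ = (fun b => T (e b)) ⟨k2, ⟨(j2 : ℕ), hj2⟩⟩ from
        (hTS T k2 ⟨(j2 : ℕ), hj2⟩ i2 j2 (by simp [hk2]; omega) rfl).symm]
      refine hD k1 k2 (Fin.mk_lt_mk.mpr ?_) _ _
      have := Fin.lt_def.mp hlt
      omega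
  have hConst : ∀ T : Filling n n a,
      RowsConstant T ↔ RowsConstant (fun b => T (e b)) := by
    intro T
    constructor
    · intro hD k j1 j2
      have hk : off + (k : ℕ) < n := by have := k.isLt; omega
      set i : Fin n := ⟨off + (k : ℕ), hk⟩
      have hj1 : (j1 : ℕ) < a i := by rw [hrow k]; exact j1.isLt
      have hj2 : (j2 : ℕ) < a i := by rw [hrow k]; exact j2.isLt
      rw [show (fun b => T (e b)) ⟨k, j1⟩ = T ⟨i, ⟨(j1 : ℕ), hj1⟩⟩ from
        hTS T k j1 i ⟨(j1 : ℕ), hj1⟩ rfl rfl]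
      rw [show (fun b => T (e b)) ⟨k, j2⟩ = T ⟨i, ⟨(j2 : ℕ), hj2⟩⟩ from
        hTS T k j2 i ⟨(j2 : ℕ), hj2⟩ rfl rfl]
      exact hD i _ _
    · intro hD i j1 j2
      have hnz : a i ≠ 0 := Nat.pos_iff_ne_zero.mp j1.pos
      have hm := hmem i hnz
      have hik : (i : ℕ) - off < α.length := by omega
      set k : Fin α.length := ⟨(i : ℕ) - off, hik⟩ with hk
      have hai : a i = cshape α k := by
        have h1 := hrow k
        have h2 : (⟨off + ((i : ℕ) - off), by have := i.isLt; omega⟩ : Fin n) = i :=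
          Fin.ext (by simp; omega)
        rw [h2] at h1; exact h1
      have hj1 : (j1 : ℕ) < cshape α k := by rw [← hai]; exact j1.isLt
      have hj2 : (j2 : ℕ) < cshape α k := by rw [← hai]; exact j2.isLt
      rw [show T ⟨i, j1⟩ = (fun b => T (e b)) ⟨k, ⟨(j1 : ℕ), hj1⟩⟩ from
        (hTS T k ⟨(j1 : ℕ), hj1⟩ i j1 (by simp [hk]; omega) rfl).symm]
      rw [show T ⟨i, j2⟩ = (fun b => T (e b)) ⟨k, ⟨(j2 : ℕ), hj2⟩⟩ from
        (hTS T k ⟨(j2 : ℕ), hj2⟩ i j2 (by simp [hk]; omega) rfl).symm]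
      exact hD k _ _
  constructor
  · refine genfun_equiv e _ _ ?_
    intro T
    constructor
    · rintro ⟨h1, _, h3⟩
      exact ⟨(hIncr T).mp h1, (hSep T).mp h3⟩
    · rintro ⟨h1, h3⟩
      have hSepT := (hSep T).mpr h3
      exact ⟨(hIncr T).mpr h1, flagLower_bottom hL hnzk ha00 hSepT, hSepT⟩
  · refine genfun_equiv e _ _ ?_
    intro T
    constructor
    · rintro ⟨h1, _, h3, h4⟩
      exact ⟨(hIncr T).mp h1, (hSep T).mp h3, (hConst T).mp h4⟩
    · rintro ⟨h1, h3, h4⟩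
      have hSepT := (hSep T).mpr h3
      exact ⟨(hIncr T).mpr h1, flagLower_bottom hL hnzk ha00 hSepT, hSepT, (hConst T).mpr h4⟩


lemma rev_genfun {m n : ℕ} (c : Fin m → ℕ) :
    (genfun (n := n) c (fun T => RowsWeakIncr T ∧ RowsSeparated T)
      = genfun (n := n) c (fun T => RowsWeakDecr T ∧ RowsSeparated T)) ∧
    (genfun (n := n) c (fun T => RowsWeakIncr T ∧ RowsSeparated T ∧ RowsConstant T)
      = genfun (n := n) c (fun T => RowsWeakDecr T ∧ RowsSeparated T ∧ RowsConstant T)) := by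
  classical
  set e : ((i : Fin m) × Fin (c i)) ≃ ((i : Fin m) × Fin (c i)) :=
    Equiv.sigmaCongrRight (fun i => (Fin.revPerm : Equiv.Perm (Fin (c i)))) with hedef
  have heval : ∀ (i : Fin m) (j : Fin (c i)), e ⟨i, j⟩ = ⟨i, j.rev⟩ := by
    intro i j; rfl
  have hbox : ∀ (T : Filling m n c) (i : Fin m) (j : Fin (c i)),
      (fun b => T (e b)) ⟨i, j⟩ = T ⟨i, j.rev⟩ := by
    intro T i j
    show T (e ⟨i, j⟩) = T ⟨i, j.rev⟩
    rw [heval]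
  have hbox' : ∀ (T : Filling m n c) (i : Fin m) (j : Fin (c i)),
      T ⟨i, j⟩ = (fun b => T (e b)) ⟨i, j.rev⟩ := by
    intro T i j
    rw [hbox]
    exact fill_congr T rfl (by simp)
  have hIncr : ∀ T : Filling m n c,
      RowsWeakIncr T ↔ RowsWeakDecr (fun b => T (e b)) := by
    intro T
    constructor
    · intro hI i j j' hle
      rw [hbox, hbox]
      exact hI i j'.rev j.rev (Fin.rev_le_rev.mpr hle)
    · intro hD i j j' hle
      rw [hbox' T i j, hbox' T i j']
      exact hD i j'.rev j.rev (Fin.rev_le_rev.mpr hle)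
  have hSep : ∀ T : Filling m n c,
      RowsSeparated T ↔ RowsSeparated (fun b => T (e b)) := by
    intro T
    constructor
    · intro hS i i' h j j'
      rw [hbox, hbox]
      exact hS i i' h _ _
    · intro hS i i' h j j'
      rw [hbox' T i j, hbox' T i' j']
      exact hS i i' h _ _
  have hConst : ∀ T : Filling m n c,
      RowsConstant T ↔ RowsConstant (fun b => T (e b)) := by
    intro T
    constructor
    · intro hC i j j'
      rw [hbox, hbox]
      exact hC i _ _
    · intro hC i j j'
      rw [hbox' T i j, hbox' T i j']
      exact hC i _ _
  constructor
  · refine genfun_equiv e _ _ ?_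
    intro T
    constructor
    · rintro ⟨h1, h2⟩
      exact ⟨(hIncr T).mp h1, (hSep T).mp h2⟩
    · rintro ⟨h1, h2⟩
      exact ⟨(hIncr T).mpr h1, (hSep T).mpr h2⟩
  · refine genfun_equiv e _ _ ?_
    intro T
    constructor
    · rintro ⟨h1, h2, h3⟩
      exact ⟨(hIncr T).mp h1, (hSep T).mp h2, (hConst T).mp h3⟩
    · rintro ⟨h1, h2, h3⟩
      exact ⟨(hIncr T).mpr h1, (hSep T).mpr h2, (hConst T).mpr h3⟩

end PadTransfer

/-- ⊆ direction, fundamental version -/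
lemma sub_dir_f {n : ℕ} {a b : Fin n → ℕ} (hb : fslide n a = yfslide n b) :
    ∃ α : List ℕ, (∀ x ∈ α, 0 < x) ∧ α.length ≤ n ∧ fslide n a = Fqs n α := by
  classical
  have hmin : ∃ T : Filling n n a,
      (RowsWeakDecr T ∧ FlagUpper T ∧ RowsSeparated T) ∧
        ∀ v : Fin n, wtF T v ≠ 0 → (v : ℕ) < nzRows a := by
    obtain ⟨T, h1, h2, h3, h4, h5, h6⟩ := exists_min_filling n a
    exact ⟨T, ⟨h1, h4, h5⟩, h6⟩
  have hmax : ∃ T : Filling n n b,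
      (RowsWeakIncr T ∧ FlagLower T ∧ RowsSeparated T) ∧
        ∀ v : Fin n, wtF T v ≠ 0 → n - nzRows b ≤ (v : ℕ) := by
    obtain ⟨T, h1, h2, h3, h4, h5, h6⟩ := exists_max_filling n b
    exact ⟨T, ⟨h2, h4, h5⟩, h6⟩
  have hsupp := support_top_packed _ _ (fun T h => h.2.1) (fun T h => h.2.1) hmin hmax hb
  set L := nzRows a with hLdef
  have hL : L ≤ n := nzRows_le a
  have hpos : ∀ x ∈ List.ofFn (fun k : Fin L => a ⟨n - L + (k : ℕ), by have := k.isLt; omega⟩),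
      0 < x := by
    intro x hx
    rw [List.mem_ofFn] at hx
    obtain ⟨k, rfl⟩ := hx
    exact Nat.pos_of_ne_zero ((hsupp _).mpr (by simp))
  have ha0 : ∀ i : Fin n, ¬(n - L ≤ (i : ℕ) ∧ (i : ℕ) < (n - L) + L) → a i = 0 := by
    intro i hcon
    have hi := i.isLt
    by_contra hne
    have := (hsupp i).mp hne
    omega
  have hlen := List.length_ofFn (f := fun k : Fin L => a ⟨n - L + (k : ℕ), by have := k.isLt; omega⟩)
  have haK : ∀ (k : ℕ)
      (hk : k < (List.ofFn (fun k : Fin L => a ⟨n - L + (k : ℕ), by have := k.isLt; omega⟩)).length),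
      a ⟨(n - L) + k, by rw [hlen] at hk; omega⟩ =
      (List.ofFn (fun k : Fin L => a ⟨n - L + (k : ℕ), by have := k.isLt; omega⟩)).get ⟨k, hk⟩ := by
    intro k hk
    rw [List.get_ofFn]
    exact congrArg a (Fin.ext (by simp))
  exact ⟨_, hpos, by rw [hlen]; omega, (pad_fs n L hL _ hlen hpos a ha0 haK).1⟩

/-- ⊆ direction, monomial version -/
lemma sub_dir_m {n : ℕ} {a b : Fin n → ℕ} (hb : mslide n a = ymslide n b) :
    ∃ α : List ℕ, (∀ x ∈ α, 0 < x) ∧ α.length ≤ n ∧ mslide n a = Mqs n α := by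
  classical
  have hmin : ∃ T : Filling n n a,
      (RowsWeakDecr T ∧ FlagUpper T ∧ RowsSeparated T ∧ RowsConstant T) ∧
        ∀ v : Fin n, wtF T v ≠ 0 → (v : ℕ) < nzRows a := by
    obtain ⟨T, h1, h2, h3, h4, h5, h6⟩ := exists_min_filling n a
    exact ⟨T, ⟨h1, h4, h5, h3⟩, h6⟩
  have hmax : ∃ T : Filling n n b,
      (RowsWeakIncr T ∧ FlagLower T ∧ RowsSeparated T ∧ RowsConstant T) ∧
        ∀ v : Fin n, wtF T v ≠ 0 → n - nzRows b ≤ (v : ℕ) := by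
    obtain ⟨T, h1, h2, h3, h4, h5, h6⟩ := exists_max_filling n b
    exact ⟨T, ⟨h2, h4, h5, h3⟩, h6⟩
  have hsupp := support_top_packed _ _ (fun T h => h.2.1) (fun T h => h.2.1) hmin hmax hb
  set L := nzRows a with hLdef
  have hL : L ≤ n := nzRows_le a
  have hpos : ∀ x ∈ List.ofFn (fun k : Fin L => a ⟨n - L + (k : ℕ), by have := k.isLt; omega⟩),
      0 < x := by
    intro x hx
    rw [List.mem_ofFn] at hx
    obtain ⟨k, rfl⟩ := hx
    exact Nat.pos_of_ne_zero ((hsupp _).mpr (by simp))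
  have ha0 : ∀ i : Fin n, ¬(n - L ≤ (i : ℕ) ∧ (i : ℕ) < (n - L) + L) → a i = 0 := by
    intro i hcon
    have hi := i.isLt
    by_contra hne
    have := (hsupp i).mp hne
    omega
  have hlen := List.length_ofFn (f := fun k : Fin L => a ⟨n - L + (k : ℕ), by have := k.isLt; omega⟩)
  have haK : ∀ (k : ℕ)
      (hk : k < (List.ofFn (fun k : Fin L => a ⟨n - L + (k : ℕ), by have := k.isLt; omega⟩)).length),
      a ⟨(n - L) + k, by rw [hlen] at hk; omega⟩ =
      (List.ofFn (fun k : Fin L => a ⟨n - L + (k : ℕ), by have := k.isLt; omega⟩)).get ⟨k, hk⟩ := by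
    intro k hk
    rw [List.get_ofFn]
    exact congrArg a (Fin.ext (by simp))
  exact ⟨_, hpos, by rw [hlen]; omega, (pad_fs n L hL _ hlen hpos a ha0 haK).2⟩

/-- ⊇ direction -/
lemma sup_dir {n : ℕ} (α : List ℕ) (hpos : ∀ x ∈ α, 0 < x) (hlen : α.length ≤ n) :
    (∃ a : Fin n → ℕ, Fqs n α = fslide n a) ∧
    (∃ b : Fin n → ℕ, Fqs n α = yfslide n b) ∧
    (∃ a : Fin n → ℕ, Mqs n α = mslide n a) ∧
    (∃ b : Fin n → ℕ, Mqs n α = ymslide n b) := by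
  classical
  set L := α.length with hLdef
  have hL : L ≤ n := hlen
  set a : Fin n → ℕ :=
    fun i => if h : n - L ≤ (i : ℕ) then α.get ⟨(i : ℕ) - (n - L), by have := i.isLt; omega⟩
      else 0 with hadef
  have ha0 : ∀ i : Fin n, ¬(n - L ≤ (i : ℕ) ∧ (i : ℕ) < (n - L) + L) → a i = 0 := by
    intro i hcon
    have hi := i.isLt
    rw [hadef]
    exact dif_neg (by omega)
  have haK : ∀ (k : ℕ) (hk : k < α.length),
      a ⟨(n - L) + k, by omega⟩ = α.get ⟨k, hk⟩ := by
    intro k hk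
    rw [hadef]
    simp only []
    rw [dif_pos (by simp : n - L ≤ ((⟨(n - L) + k, by omega⟩ : Fin n) : ℕ))]
    congr 1
    exact Fin.ext (by simp)
  set b : Fin n → ℕ :=
    fun i => if h : (i : ℕ) < L then α.get ⟨(i : ℕ), by omega⟩ else 0 with hbdef
  have hb0 : ∀ i : Fin n, ¬(0 ≤ (i : ℕ) ∧ (i : ℕ) < 0 + L) → b i = 0 := by
    intro i hcon
    rw [hbdef]
    exact dif_neg (by omega)
  have hbK : ∀ (k : ℕ) (hk : k < α.length),
      b ⟨0 + k, by omega⟩ = α.get ⟨k, hk⟩ := by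
    intro k hk
    rw [hbdef]
    simp only []
    rw [dif_pos (by simp; omega : ((⟨0 + k, by omega⟩ : Fin n) : ℕ) < L)]
    congr 1
    exact Fin.ext (by simp)
  have hpadf := pad_fs n L hL α rfl hpos a ha0 haK
  have hpady := pad_yfs n L hL α rfl hpos b hb0 hbK
  have hrev := rev_genfun (n := n) (cshape α)
  exact ⟨⟨a, hpadf.1.symm⟩, ⟨b, (hpady.1.trans hrev.1).symm⟩,
    ⟨a, hpadf.2.symm⟩, ⟨b, (hpady.2.trans hrev.2).symm⟩⟩


theorem slide_intersections (n : ℕ) (hn : 0 < n) :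
    ({p : MvPolynomial (Fin n) ℤ | ∃ a : Fin n → ℕ, p = fslide n a} ∩
        {p : MvPolynomial (Fin n) ℤ | ∃ b : Fin n → ℕ, p = yfslide n b} =
      {p : MvPolynomial (Fin n) ℤ |
        ∃ α : List ℕ, (∀ x ∈ α, 0 < x) ∧ α.length ≤ n ∧ p = Fqs n α}) ∧
    ({p : MvPolynomial (Fin n) ℤ | ∃ a : Fin n → ℕ, p = mslide n a} ∩
        {p : MvPolynomial (Fin n) ℤ | ∃ b : Fin n → ℕ, p = ymslide n b} =
      {p : MvPolynomial (Fin n) ℤ |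
        ∃ α : List ℕ, (∀ x ∈ α, 0 < x) ∧ α.length ≤ n ∧ p = Mqs n α}) := by
  constructor
  · ext p
    simp only [Set.mem_inter_iff, Set.mem_setOf_eq]
    constructor
    · rintro ⟨⟨a, rfl⟩, ⟨b, hb⟩⟩
      exact sub_dir_f hb
    · rintro ⟨α, hpos, hlen, rfl⟩
      obtain ⟨⟨a, ha⟩, ⟨b, hb⟩, _, _⟩ := sup_dir α hpos hlen
      exact ⟨⟨a, ha⟩, ⟨b, hb⟩⟩
  · ext p
    simp only [Set.mem_inter_iff, Set.mem_setOf_eq]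
    constructor
    · rintro ⟨⟨a, rfl⟩, ⟨b, hb⟩⟩
      exact sub_dir_m hb
    · rintro ⟨α, hpos, hlen, rfl⟩
      obtain ⟨_, _, ⟨a, ha⟩, ⟨b, hb⟩⟩ := sup_dir α hpos hlen
      exact ⟨⟨a, ha⟩, ⟨b, hb⟩⟩


end PaperYR
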